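/- arXiv:1210.2204 — 2 statements merged into one kernel-verified Lean document; each statement's English description precedes it below -/
import Mathlib

section
/- Let H be a real Hilbert space and let R, W ⊆ H with R bounded and W weakly compact. Then the pseudometric space (W, d_R) is complete: every sequence in W that is Cauchy with respect to d_R has a limit in W with respect to d_R. -/
open scoped InnerProductSpace
open Filter

noncomputable section

/-- The seminorm `‖x‖_R = sup_{r ∈ R} |⟨r,x⟩|` associated to a bounded set `R`. -/
def normR {H : Type*} [NormedAddCommGroup H] [InnerProductSpace ℝ H] (R : Set H) (x : H) : ℝ :=
  ⨆ r : R, |⟪(r : H), x⟫_ℝ|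

/-- The pseudometric `d_R(x,y) = ‖x - y‖_R`. -/
def dR {H : Type*} [NormedAddCommGroup H] [InnerProductSpace ℝ H] (R : Set H) (x y : H) : ℝ :=
  normR R (x - y)

/-!
Weak compactness of `W` provides a weak cluster point `x ∈ W` of the sequence. Each `d_R(y, ·)`
is the supremum of the weakly continuous functions `z ↦ |⟨r, y - z⟩|`, `r ∈ R`, hence weakly lower
semicontinuous, so the Cauchy bound `d_R(aₙ, aₘ) ≤ ε` for `m ≥ N` passes to the cluster point:
`d_R(aₙ, x) ≤ ε` for `n ≥ N`.
-/

open Set Topology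

section

variable {H : Type*} [NormedAddCommGroup H] [InnerProductSpace ℝ H] {R : Set H}

lemma normR_nonneg (x : H) : 0 ≤ normR R x :=
  Real.iSup_nonneg fun _ => abs_nonneg _

lemma Bornology.IsBounded.bddAbove_abs_inner (hR : Bornology.IsBounded R) (x : H) :
    BddAbove (range fun r : R => |⟪(r : H), x⟫_ℝ|) := by
  obtain ⟨C, hC⟩ := hR.exists_norm_le
  refine ⟨C * ‖x‖, ?_⟩
  rintro _ ⟨r, rfl⟩
  calc |⟪(r : H), x⟫_ℝ| ≤ ‖(r : H)‖ * ‖x‖ := abs_real_inner_le_norm _ _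
    _ ≤ C * ‖x‖ := by gcongr; exact hC r r.2

lemma continuous_inner_toWeakSpace_symm (r : H) :
    Continuous fun z : WeakSpace ℝ H => ⟪r, (toWeakSpace ℝ H).symm z⟫_ℝ :=
  WeakBilin.eval_continuous (topDualPairing ℝ H).flip (innerSL ℝ r)

lemma lowerSemicontinuous_dR_toWeakSpace_symm (hR : Bornology.IsBounded R) (y : H) :
    LowerSemicontinuous fun z : WeakSpace ℝ H => dR R y ((toWeakSpace ℝ H).symm z) := by
  refine lowerSemicontinuous_ciSup (fun z => hR.bddAbove_abs_inner _) fun r => ?_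
  simp only [inner_sub_right]
  exact (continuous_const.sub (continuous_inner_toWeakSpace_symm (r : H))).abs.lowerSemicontinuous

lemma dR_le_of_mapClusterPt {ι : Type*} {l : Filter ι} (hR : Bornology.IsBounded R)
    {a : ι → H} {x y : H} {c : ℝ}
    (hx : MapClusterPt (toWeakSpace ℝ H x) l (toWeakSpace ℝ H ∘ a))
    (hc : ∀ᶠ i in l, dR R y (a i) ≤ c) : dR R y x ≤ c :=
  ((lowerSemicontinuous_dR_toWeakSpace_symm hR y).isClosed_preimage c).mem_of_mapClusterPt hx hc

lemma tendsto_dR_of_mapClusterPt (hR : Bornology.IsBounded R) {a : ℕ → H} {x : H}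
    (hCauchy : ∀ ε > 0, ∃ N : ℕ, ∀ m ≥ N, ∀ n ≥ N, dR R (a m) (a n) < ε)
    (hx : MapClusterPt (toWeakSpace ℝ H x) atTop (toWeakSpace ℝ H ∘ a)) :
    Tendsto (fun n => dR R (a n) x) atTop (𝓝 0) := by
  refine tendsto_order.2 ⟨fun c hc => .of_forall fun n => hc.trans_le (normR_nonneg _),
    fun ε hε => ?_⟩
  obtain ⟨N, hN⟩ := hCauchy (ε / 2) (half_pos hε)
  refine eventually_atTop.2 ⟨N, fun n hn => ?_⟩
  have : dR R (a n) x ≤ ε / 2 :=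
    dR_le_of_mapClusterPt hR hx (eventually_atTop.2 ⟨N, fun m hm => (hN n hn m hm).le⟩)
  linarith

end

theorem stmt1_general {H : Type*} [NormedAddCommGroup H] [InnerProductSpace ℝ H]
    (R W : Set H) (hR : Bornology.IsBounded R)
    (hW : IsCompact (toWeakSpace ℝ H '' W))
    (a : ℕ → H) (ha : ∀ n, a n ∈ W)
    (hCauchy : ∀ ε > 0, ∃ N : ℕ, ∀ m ≥ N, ∀ n ≥ N, dR R (a m) (a n) < ε) :
    ∃ x ∈ W, Tendsto (fun n => dR R (a n) x) atTop (nhds 0) := by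
  obtain ⟨_, ⟨x, hxW, rfl⟩, hx⟩ := hW.exists_mapClusterPt (f := atTop)
    (tendsto_principal.2 (.of_forall fun n => mem_image_of_mem _ (ha n)))
  exact ⟨x, hxW, tendsto_dR_of_mapClusterPt hR hCauchy hx⟩

/-- Let `H` be a real Hilbert space and `R, W ⊆ H` with `R` bounded and `W`
weakly compact.  Then the pseudometric space `(W, d_R)` is complete: every sequence in `W`
that is Cauchy with respect to `d_R` has a limit in `W` with respect to `d_R`. -/
theorem stmt1 {H : Type*} [NormedAddCommGroup H] [InnerProductSpace ℝ H] [CompleteSpace H]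
    (R W : Set H) (hR : Bornology.IsBounded R)
    (hW : IsCompact (toWeakSpace ℝ H '' W))
    (a : ℕ → H) (ha : ∀ n, a n ∈ W)
    (hCauchy : ∀ ε > 0, ∃ N : ℕ, ∀ m ≥ N, ∀ n ≥ N, dR R (a m) (a n) < ε) :
    ∃ x ∈ W, Tendsto (fun n => dR R (a n) x) atTop (nhds 0) :=
  stmt1_general R W hR hW a ha hCauchy
end
end

section
/- Let C be an infinite set and H := ℓ²(C). Then for every natural number m, the orbit space B(H)^m / O(H) is compact, where B(H) is the closed unit ball of H with the norm topology, O(H) is the group of linear isometric automorphisms of H acting diagonally on B(H)^m, and the orbit space carries the quotient topology. Equivalently, B(H)^m with the quotient pseudometric (d/O(H))((x_i),(y_i)) := inf_{g∈O(H)} max_i ‖x_i − g·y_i‖ is compact. -/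
noncomputable section

/-- `ℓ²(C)`, the real Hilbert space of square-summable functions `C → ℝ`. -/
abbrev l2 (C : Type) : Type := lp (fun _ : C => ℝ) 2

/-- The topology induced by a pseudometric `d` : the one generated by the open balls of `d`. -/
def ballTopology {X : Type*} (d : X → X → ℝ) : TopologicalSpace X :=
  TopologicalSpace.generateFrom {s | ∃ x ε, 0 < ε ∧ s = {y | d x y < ε}}

/-!
Composing reflections, any `m` vectors of a real inner product space `H` are moved by some
`g ∈ O(H)` into the span `V` of `m` fixed orthonormal vectors. The orbit pseudodistance is
`O(H)`-invariant, so in the orbit topology every `x ∈ B(H)^m` specializes to `g ∘ x`, a point of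
`(B(H) ∩ V)^m`. That set is norm-compact, hence compact for the coarser orbit topology, and a
compact set to which every point of `B(H)^m` specializes forces `B(H)^m` to be compact.
-/

open Submodule

theorem IsCompact.of_forall_specializes {X : Type*} [TopologicalSpace X] {K S : Set X}
    (hK : IsCompact K) (hKS : K ⊆ S) (h : ∀ x ∈ S, ∃ y ∈ K, x ⤳ y) : IsCompact S :=
  hK.nhdsKer.of_subset_of_specializes (fun x hx => mem_nhdsKer_iff_specializes.2 (h x hx))
    fun _ hx => (mem_nhdsKer_iff_specializes.1 hx).imp fun _ hy => ⟨hKS hy.1, hy.2⟩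

section ballTopology

variable {X : Type*} {d : X → X → ℝ}

theorem le_ballTopology [t : TopologicalSpace X] (hd : ∀ c, UpperSemicontinuous (d c)) :
    t ≤ ballTopology d :=
  le_generateFrom fun _ ⟨c, ε, _, hs⟩ =>
    hs ▸ upperSemicontinuous_iff_isOpen_preimage.1 (hd c) ε

theorem specializes_ballTopology_of_le {x y : X} (h : ∀ c, d c x ≤ d c y) :
    @Specializes X (ballTopology d) x y := by
  let := ballTopology d
  refine specializes_iff_nhds.2 (TopologicalSpace.tendsto_nhds_generateFrom_iff.2 ?_)
  rintro _ ⟨c, ε, hε, rfl⟩ hy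
  have hopen : IsOpen {y | d c y < ε} :=
    TopologicalSpace.isOpen_generateFrom_of_mem ⟨c, ε, hε, rfl⟩
  exact hopen.mem_nhds ((h c).trans_lt hy)

end ballTopology

section orbitDist

variable {E ι : Type*} [NormedAddCommGroup E] [NormedSpace ℝ E]

def orbitDist (x y : ι → E) : ℝ := ⨅ g : E ≃ₗᵢ[ℝ] E, ⨆ i, ‖x i - g (y i)‖

theorem orbitDist_comp_right (x y : ι → E) (g : E ≃ₗᵢ[ℝ] E) :
    orbitDist x (g ∘ y) = orbitDist x y :=
  (Equiv.mulRight g).iInf_comp (g := fun h : E ≃ₗᵢ[ℝ] E => ⨆ i, ‖x i - h (y i)‖)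

theorem orbitDist_le_add_dist [Fintype ι] (x y y' : ι → E) :
    orbitDist x y ≤ orbitDist x y' + dist y y' := by
  have hbdd : BddBelow (Set.range fun g : E ≃ₗᵢ[ℝ] E => ⨆ i, ‖x i - g (y i)‖) :=
    ⟨0, by rintro _ ⟨g, rfl⟩; exact Real.iSup_nonneg fun i => norm_nonneg _⟩
  rw [← sub_le_iff_le_add, orbitDist]
  refine le_ciInf fun g => sub_le_iff_le_add.2 <| (ciInf_le hbdd g).trans ?_
  refine Real.iSup_le (fun i => ?_)
    (add_nonneg (Real.iSup_nonneg fun i => norm_nonneg _) dist_nonneg)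
  calc ‖x i - g (y i)‖ ≤ ‖x i - g (y' i)‖ + ‖g (y' i) - g (y i)‖ :=
        norm_sub_le_norm_sub_add_norm_sub ..
    _ ≤ (⨆ i, ‖x i - g (y' i)‖) + dist y y' := by
      gcongr
      · exact le_ciSup (f := fun i => ‖x i - g (y' i)‖) (Set.finite_range _).bddAbove i
      · rw [← map_sub, g.norm_map, ← dist_eq_norm, dist_comm]
        exact dist_le_pi_dist y y' i

theorem lipschitzWith_orbitDist [Fintype ι] (x : ι → E) : LipschitzWith 1 (orbitDist x) :=
  LipschitzWith.of_le_add (orbitDist_le_add_dist x)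

end orbitDist

section InnerProductSpace

variable {E : Type*} [NormedAddCommGroup E] [InnerProductSpace ℝ E]

theorem Orthonormal.exists_linearIsometryEquiv_apply_eq :
    ∀ {n : ℕ} {v w : Fin n → E}, Orthonormal ℝ v → Orthonormal ℝ w →
      ∃ g : E ≃ₗᵢ[ℝ] E, ∀ i, g (v i) = w i
  | 0, _, _, _, _ => ⟨LinearIsometryEquiv.refl ℝ E, finZeroElim⟩
  | n + 1, v, w, hv, hw => by
    obtain ⟨g, hg⟩ := exists_linearIsometryEquiv_apply_eq
      (hv.comp _ (Fin.castSucc_injective n)) (hw.comp _ (Fin.castSucc_injective n))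
    simp only [Function.comp_apply] at hg
    set u := g (v (Fin.last n))
    -- the reflection exchanging `u` and `w (last n)` fixes every vector orthogonal to both
    have hperp : ∀ i : Fin n, w i.castSucc ∈ (ℝ ∙ (u - w (Fin.last n)))ᗮ := by
      intro i
      have hne := (Fin.castSucc_lt_last i).ne'
      rw [mem_orthogonal_singleton_iff_inner_right, inner_sub_left, ← hg i, g.inner_map_map,
        hg i, hv.inner_eq_zero hne, hw.inner_eq_zero hne, sub_zero]
    have hu : ‖u‖ = ‖w (Fin.last n)‖ := by rw [g.norm_map, hv.1, hw.1]
    refine ⟨g.trans (reflection (ℝ ∙ (u - w (Fin.last n)))ᗮ), Fin.lastCases ?_ fun i => ?_⟩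
    · exact reflection_sub hu
    · rw [LinearIsometryEquiv.trans_apply, hg i, reflection_mem_subspace_eq_self (hperp i)]

theorem Orthonormal.exists_linearIsometryEquiv_apply_mem_span {ι : Type*} [Fintype ι]
    {e : ι → E} (he : Orthonormal ℝ e) (x : ι → E) :
    ∃ g : E ≃ₗᵢ[ℝ] E, ∀ i, g (x i) ∈ span ℝ (Set.range e) := by
  set U := span ℝ (Set.range x)
  have : FiniteDimensional ℝ U := .span_of_finite ℝ (Set.finite_range x)
  let b := stdOrthonormalBasis ℝ U
  have hk : Module.finrank ℝ U ≤ Fintype.card ι := finrank_range_le_card x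
  let emb : Fin (Module.finrank ℝ U) ↪ ι :=
    (Fin.castLEEmb hk).trans (Fintype.equivFin ι).symm.toEmbedding
  have hb : Orthonormal ℝ (U.subtypeₗᵢ ∘ b) := b.orthonormal.comp_linearIsometry _
  obtain ⟨g, hg⟩ := hb.exists_linearIsometryEquiv_apply_eq (he.comp emb emb.injective)
  refine ⟨g, fun i => ?_⟩
  have hxi : x i = ((∑ j, inner ℝ (b j) ⟨x i, subset_span ⟨i, rfl⟩⟩ • b j : U) : E) := by
    rw [b.sum_repr']
  rw [hxi, coe_sum, map_sum]
  refine sum_mem fun j _ => ?_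
  rw [coe_smul, map_smul]
  exact smul_mem _ _ (subset_span ⟨emb j, (hg j).symm⟩)

theorem isCompact_ballTopology_orbitDist {ι : Type*} [Fintype ι] {e : ι → E}
    (he : Orthonormal ℝ e) :
    @IsCompact (ι → E) (ballTopology orbitDist) {x | ∀ i, ‖x i‖ ≤ 1} := by
  set V := span ℝ (Set.range e)
  have : FiniteDimensional ℝ V := .span_of_finite ℝ (Set.finite_range e)
  set K : Set (ι → E) := Set.univ.pi fun _ => (↑) '' Metric.closedBall (0 : V) 1
  have hK : IsCompact K :=
    isCompact_univ_pi fun _ => (isCompact_closedBall _ _).image continuous_subtype_val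
  have hle : (inferInstance : TopologicalSpace (ι → E)) ≤ ballTopology orbitDist :=
    le_ballTopology fun x => (lipschitzWith_orbitDist x).continuous.upperSemicontinuous
  have hK' : @IsCompact _ (ballTopology orbitDist) K := by
    simpa using
      @IsCompact.image _ _ _ (ballTopology orbitDist) _ _ hK (continuous_id_of_le hle)
  refine @IsCompact.of_forall_specializes _ (ballTopology orbitDist) _ _ hK' ?_ ?_
  · intro x hx i
    obtain ⟨v, hv, hvx⟩ := hx i (Set.mem_univ i)
    simpa [← hvx] using hv
  · intro x hx
    obtain ⟨g, hg⟩ := he.exists_linearIsometryEquiv_apply_mem_span x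
    refine ⟨g ∘ x, fun i _ => ⟨⟨g (x i), hg i⟩, ?_, rfl⟩,
      specializes_ballTopology_of_le fun c => (orbitDist_comp_right c x g).ge⟩
    simpa using hx i

end InnerProductSpace

theorem lp.orthonormal_single {C : Type*} [DecidableEq C] :
    Orthonormal ℝ fun c : C => lp.single 2 c (1 : ℝ) := by
  refine orthonormal_iff_ite.2 fun c c' => ?_
  rw [lp.inner_single_left, lp.single_apply]
  split_ifs <;> simp_all

/-- Let `C` be an infinite set and `H = ℓ²(C)`.  For every `m`, the orbit
space `B(H)^m / O(H)` is compact, where `O(H)` (the group of linear isometric automorphisms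
of `H`) acts diagonally; equivalently, `B(H)^m` is compact for the quotient pseudometric
`(d/O(H))((xᵢ),(yᵢ)) = inf_{g ∈ O(H)} max_i ‖xᵢ − g·yᵢ‖`. -/
theorem stmt14 (C : Type) (hC : Infinite C) (m : ℕ) :
    @IsCompact (Fin m → l2 C)
      (ballTopology (fun x y => ⨅ g : l2 C ≃ₗᵢ[ℝ] l2 C, ⨆ i : Fin m, ‖x i - g (y i)‖))
      {x | ∀ i, ‖x i‖ ≤ 1} := by
  classical
  let ι : Fin m ↪ C := Fin.valEmbedding.trans (Infinite.natEmbedding C)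
  exact isCompact_ballTopology_orbitDist (lp.orthonormal_single.comp ι ι.injective)
end
end
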